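/- arXiv:2201.03702 — 2 statements merged into one kernel-verified Lean document; each statement's English description precedes it below -/
import Mathlib

section
/- Let three hypotheses have entailed sets A₁, A₂, A₃ and sizes s₁, s₂, s₃ ∈ ℕ, where A₃ is a specialization of A₁ (A₃ ⊆ A₁). If, as integers, s₃ > |E⁻| + tp(A₁) − S_MDL(A₂,s₂), then S_MDL(A₂,s₂) > S_MDL(A₃,s₃). (Size threshold for pruning specializations of A₁ under the MDL score.) -/
open Finset

variable {α : Type*}

/-- True positives: examples entailed by the hypothesis that are positive. -/
def tp [DecidableEq α] (Ep A : Finset α) : ℕ := (A ∩ Ep).card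

/-- True negatives: negative examples not entailed by the hypothesis. -/
def tn [DecidableEq α] (En A : Finset α) : ℕ := (En \ A).card

/-- False negatives: positive examples not entailed by the hypothesis. -/
def fnScore [DecidableEq α] (Ep A : Finset α) : ℕ := (Ep \ A).card

/-- False positives: negative examples entailed by the hypothesis. -/
def fpScore [DecidableEq α] (En A : Finset α) : ℕ := (A ∩ En).card

/-- Accuracy score. -/
def sAcc [DecidableEq α] (Ep En A : Finset α) : ℕ := tp Ep A + tn En A

/-- MDL score: accuracy minus hypothesis size, as an integer. -/
def sMdl [DecidableEq α] (Ep En A : Finset α) (s : ℕ) : ℤ := (tp Ep A + tn En A : ℤ) - s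

theorem tp_mono [DecidableEq α] (Ep : Finset α) {A B : Finset α} (hAB : A ⊆ B) :
    tp Ep A ≤ tp Ep B :=
  card_le_card (inter_subset_inter_right hAB)

theorem tn_le_card [DecidableEq α] (En A : Finset α) : tn En A ≤ En.card :=
  card_le_card sdiff_subset

theorem sMdl_le_of_subset [DecidableEq α] (Ep En : Finset α) {A B : Finset α} (hAB : A ⊆ B)
    (s : ℕ) : sMdl Ep En A s ≤ (En.card : ℤ) + tp Ep B - s := by
  have htp : (tp Ep A : ℤ) ≤ tp Ep B := by exact_mod_cast tp_mono Ep hAB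
  have htn : (tn En A : ℤ) ≤ En.card := by exact_mod_cast tn_le_card En A
  unfold sMdl
  linarith

theorem mdl_specialization_size_threshold_general [DecidableEq α] (Ep En A1 A2 A3 : Finset α)
    (s2 s3 : ℕ) (hspec : A3 ⊆ A1)
    (h : (s3 : ℤ) > (En.card : ℤ) + (tp Ep A1 : ℤ) - sMdl Ep En A2 s2) :
    sMdl Ep En A2 s2 > sMdl Ep En A3 s3 := by
  have hbound := sMdl_le_of_subset Ep En hspec s3
  linarith

theorem mdl_specialization_size_threshold [DecidableEq α] (Ep En A1 A2 A3 : Finset α)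
    (s1 s2 s3 : ℕ) (hspec : A3 ⊆ A1)
    (h : (s3 : ℤ) > (En.card : ℤ) + (tp Ep A1 : ℤ) - sMdl Ep En A2 s2) :
    sMdl Ep En A2 s2 > sMdl Ep En A3 s3 :=
  mdl_specialization_size_threshold_general Ep En A1 A2 A3 s2 s3 hspec h
end

section
/- If A₃ is a generalization of A₁ (i.e., A₁ ⊆ A₃), then the accuracy score of A₃ is bounded above by the number of positive examples plus the true negatives of A₁: S_ACC(A₃) ≤ |E⁺| + tn(A₁). (Key intermediate bound in the proofs of the accuracy-score pruning constraints.) -/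
open Finset

variable {α : Type*}

theorem tp_le_card [DecidableEq α] (Ep A : Finset α) : tp Ep A ≤ Ep.card :=
  card_le_card inter_subset_right

theorem tn_antitone [DecidableEq α] (En : Finset α) : Antitone (tn En) := fun _ _ hAB =>
  card_le_card (sdiff_subset_sdiff subset_rfl hAB)

theorem acc_generalization_upper_bound [DecidableEq α] (Ep En A1 A3 : Finset α)
    (hgen : A1 ⊆ A3) :
    sAcc Ep En A3 ≤ Ep.card + tn En A1 :=
  Nat.add_le_add (tp_le_card Ep A3) (tn_antitone En hgen)
end
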